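/- In the generic queue-based mutual exclusion algorithm, if in a valid execution history H process p executes its enqueue on M (in passage i) before q executes its enqueue (in passage j), and at the end of H process q is in the critical section in passage j, then p has already executed its dequeue in passage i. Consequently at most one process is in the critical section at any time (mutual exclusion). -/

import Mathlib

/-- The phase of a process in Algorithm GQME. -/
inductive GPhase
  | nearNCS   -- after dequeue, before the next enqueue (includes the NCS)
  | doorway   -- between enqueue and isHead
  | wait
  | doneWait
  | noWait    -- after isHead returned true, before dequeue
deriving DecidableEq

/-- A configuration of Algorithm GQME: the state (Q, V) of the atomic MutexQueue M,
the Wait registers, the phase of each process, and the number of passages each process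
has started (incremented at its enqueue). -/
structure GConfig (N : ℕ) where
  Q : List (Fin N)
  V : Finset (Fin N)
  Wait : Fin N → Bool
  phase : Fin N → GPhase
  pass : Fin N → ℕ

/-- Initially the queue is empty, all Wait registers are true, all processes are in
NEAR_NCS, and no passages have been started. -/
def gInit (N : ℕ) : GConfig N :=
  ⟨[], ∅, fun _ => true, fun _ => GPhase.nearNCS, fun _ => 0⟩

/-- Events (shared-memory steps) of Algorithm GQME. -/
inductive GEv (N : ℕ)
  | enq (p : Fin N)                       -- M.enqueue()               (line 2)
  | isHeadT (p : Fin N)                   -- M.isHead() returns true   (line 3)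
  | isHeadF (p : Fin N)                   -- M.isHead() returns false  (line 3)
  | exitWait (p : Fin N)
  | deq (p : Fin N) (r : Option (Fin N))
deriving DecidableEq

/-- The transition relation of Algorithm GQME, following the pseudocode and the
(non-broken) MutexQueue transition function. -/
inductive GStep (N : ℕ) : GConfig N → GEv N → GConfig N → Prop
  | enq (c : GConfig N) (p : Fin N) :
      c.phase p = GPhase.nearNCS → p ∉ c.Q →
      GStep N c (GEv.enq p)
        { c with Q := c.Q ++ [p],
                 phase := Function.update c.phase p GPhase.doorway,
                 pass := Function.update c.pass p (c.pass p + 1) }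
  | isHeadT (c : GConfig N) (p : Fin N) :
      c.phase p = GPhase.doorway → p ∈ c.Q → p ∉ c.V → c.Q.head? = some p →
      GStep N c (GEv.isHeadT p)
        { c with V := insert p c.V,
                 phase := Function.update c.phase p GPhase.noWait }
  | isHeadF (c : GConfig N) (p : Fin N) :
      c.phase p = GPhase.doorway → p ∈ c.Q → p ∉ c.V → c.Q.head? ≠ some p →
      GStep N c (GEv.isHeadF p)
        { c with V := insert p c.V,
                 phase := Function.update c.phase p GPhase.wait }
  | exitWait (c : GConfig N) (p : Fin N) :
      c.phase p = GPhase.wait → c.Wait p = false →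
      GStep N c (GEv.exitWait p)
        { c with Wait := Function.update c.Wait p true,
                 phase := Function.update c.phase p GPhase.doneWait }
  | deq (c : GConfig N) (p : Fin N) (r : Option (Fin N)) :
      (c.phase p = GPhase.noWait ∨ c.phase p = GPhase.doneWait) →
      c.Q.head? = some p → p ∈ c.V →
      r = (match c.Q[1]? with
           | some q => if q ∈ c.V then some q else none
           | none => none) →
      GStep N c (GEv.deq p r)
        { c with Q := c.Q.tail, V := c.V.erase p,
                 Wait := (match r with
                          | some q => Function.update c.Wait q false
                          | none => c.Wait),
                 phase := Function.update c.phase p GPhase.nearNCS }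

/-- `GReaches N c H c'`: the history H of events leads from configuration c to c'. -/
inductive GReaches (N : ℕ) : GConfig N → List (GEv N) → GConfig N → Prop
  | nil (c : GConfig N) : GReaches N c [] c
  | cons {c c1 c2 : GConfig N} {e : GEv N} {l : List (GEv N)} :
      GStep N c e c1 → GReaches N c1 l c2 → GReaches N c (e :: l) c2

/-- A process is in the critical section iff it is between line 3/5 and line 7. -/
def inCS {N : ℕ} (c : GConfig N) (p : Fin N) : Prop :=
  c.phase p = GPhase.noWait ∨ c.phase p = GPhase.doneWait

/-- Number of enqueue events by process p in history H. -/
def countEnq {N : ℕ} (H : List (GEv N)) (p : Fin N) : ℕ :=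
  H.count (GEv.enq p)

/-- Whether an event is a dequeue by process p. -/
def isDeqBy {N : ℕ} (p : Fin N) : GEv N → Bool
  | GEv.deq q _ => q == p
  | _ => false

/-- Number of dequeue events by process p in history H. -/
def countDeq {N : ℕ} (H : List (GEv N)) (p : Fin N) : ℕ :=
  (H.filter (isDeqBy p)).length


/-! Two invariants hold along every run from the initial configuration. The first concerns
the configuration alone: the queue has no duplicates, a process in the CS is the head of the
queue, and `Wait[r]` is false only when `r` is the head and still waiting. A dequeue releases the
new head, which has passed `isHead` and is therefore waiting, so the invariant survives; it
gives mutual exclusion at once.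

The second relates the queue to the history: a process is in the queue iff it has one more
enqueue than dequeues, and every enqueue of a process in the queue is followed by an enqueue of
each process behind it. So if `q` is the head and enqueued at `b > a`, then either `p` is not in
the queue, or `p` enqueues again after `a`; either way `p`'s enqueue at `a` has been dequeued. -/

section

variable {N : ℕ}

theorem countEnq_append_singleton (H : List (GEv N)) (e : GEv N) (r : Fin N) :
    countEnq (H ++ [e]) r = countEnq H r + if e = .enq r then 1 else 0 := by
  by_cases he : e = .enq r <;> simp [countEnq, he]

theorem countDeq_append_singleton (H : List (GEv N)) (e : GEv N) (r : Fin N) :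
    countDeq (H ++ [e]) r = countDeq H r + if isDeqBy r e then 1 else 0 := by
  cases h : isDeqBy r e <;> simp [countDeq, List.filter_append, h]

theorem countEnq_take_lt {H : List (GEv N)} {r : Fin N} {a m : ℕ} (ham : a < m)
    (hm : H[m]? = some (.enq r)) : countEnq (H.take (a + 1)) r < countEnq H r := by
  have htake : H.take (m + 1) = H.take m ++ [.enq r] := by rw [List.take_add_one, hm]; rfl
  calc countEnq (H.take (a + 1)) r
      ≤ countEnq (H.take m) r := (List.take_prefix_take_left ham).count_le _
    _ < countEnq (H.take (m + 1)) r := by simp [htake, countEnq_append_singleton]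
    _ ≤ countEnq H r := (List.take_prefix _ _).count_le _

def EnqFollowedBy (H : List (GEv N)) (r s : Fin N) : Prop :=
  ∀ b : ℕ, H[b]? = some (GEv.enq r) → ∃ m : ℕ, b < m ∧ H[m]? = some (GEv.enq s)

theorem EnqFollowedBy.append_singleton {H : List (GEv N)} {r s : Fin N}
    (h : EnqFollowedBy H r s) {e : GEv N} (he : e ≠ .enq r) :
    EnqFollowedBy (H ++ [e]) r s := by
  intro b hb
  obtain ⟨m, hbm, hm⟩ := h b (by grind)
  exact ⟨m, hbm, by grind⟩

theorem enqFollowedBy_append_enq (H : List (GEv N)) {r s : Fin N} (hrs : r ≠ s) :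
    EnqFollowedBy (H ++ [.enq s]) r s :=
  fun b hb => ⟨H.length, by grind, List.getElem?_concat_length⟩

structure GInv (c : GConfig N) : Prop where
  nodup : c.Q.Nodup
  of_mem_V : ∀ r ∈ c.V, c.phase r = .wait ∨ inCS c r
  head_of_inCS : ∀ r, inCS c r → c.Q.head? = some r
  head_of_wait_false : ∀ r, c.Wait r = false → c.Q.head? = some r ∧ c.phase r = .wait

theorem gInv_gInit : GInv (gInit N) where
  nodup := List.nodup_nil
  of_mem_V := by simp [gInit]
  head_of_inCS := by simp [gInit, inCS]
  head_of_wait_false := by simp [gInit]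

theorem GInv.eq_of_inCS {c : GConfig N} (hc : GInv c) {x y : Fin N} (hx : inCS c x)
    (hy : inCS c y) : x = y :=
  Option.some_injective _ ((hc.head_of_inCS x hx).symm.trans (hc.head_of_inCS y hy))

theorem GInv.step {c c' : GConfig N} {e : GEv N} (hc : GInv c) (hs : GStep N c e c') :
    GInv c' := by
  obtain ⟨hnd, hV, hCS, hW⟩ := hc
  cases hs with
  | deq p r hph hhd hpV hr =>
    obtain ⟨Q', hQ⟩ := List.head?_eq_some_iff.mp hhd
    have hnext : ∀ q, r = some q → Q'.head? = some q ∧ c.phase q = .wait := by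
      rintro q rfl
      rcases Q' with _ | ⟨q', Q'⟩ <;> simp only [hQ, List.getElem?_cons_succ,
        List.getElem?_cons_zero, List.getElem?_nil, reduceCtorEq] at hr
      split_ifs at hr with hq'
      cases hr
      grind [inCS]
    constructor
    · grind
    · grind [inCS, Function.update_apply]
    · grind [inCS, Function.update_apply]
    · intro s hs
      cases r <;> grind [Function.update_apply]
  | _ => constructor <;> grind [inCS, Function.update_apply]

structure QueueInv (H : List (GEv N)) (Q : List (Fin N)) : Prop where
  countEnq_eq : ∀ r, countEnq H r = countDeq H r + if r ∈ Q then 1 else 0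
  pairwise : Q.Pairwise (EnqFollowedBy H)

theorem QueueInv.append_enq {H : List (GEv N)} {Q : List (Fin N)} (hQ : QueueInv H Q)
    {p : Fin N} (hp : p ∉ Q) : QueueInv (H ++ [.enq p]) (Q ++ [p]) where
  countEnq_eq r := by
    have := hQ.countEnq_eq r
    grind [countEnq_append_singleton, countDeq_append_singleton, isDeqBy]
  pairwise := by
    refine List.pairwise_append.mpr ⟨?_, List.pairwise_singleton _ _, ?_⟩
    · exact hQ.pairwise.imp_of_mem fun hr _ h => h.append_singleton (by grind)
    · intro r hr s hs
      rw [List.mem_singleton.mp hs]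
      exact enqFollowedBy_append_enq H (by grind)

theorem QueueInv.append_deq {H : List (GEv N)} {p : Fin N} {Q : List (Fin N)}
    (hQ : QueueInv H (p :: Q)) (hnd : (p :: Q).Nodup) (o : Option (Fin N)) :
    QueueInv (H ++ [.deq p o]) Q where
  countEnq_eq r := by
    have := hQ.countEnq_eq r
    grind [countEnq_append_singleton, countDeq_append_singleton, isDeqBy]
  pairwise := (List.pairwise_cons.mp hQ.pairwise).2.imp (·.append_singleton (by simp))

theorem QueueInv.append_of_ne_enq_of_isDeqBy_eq_false {H : List (GEv N)} {Q : List (Fin N)} (hQ : QueueInv H Q)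
    {e : GEv N} (henq : ∀ r, e ≠ .enq r) (hdeq : ∀ r, isDeqBy r e = false) :
    QueueInv (H ++ [e]) Q where
  countEnq_eq r := by
    simpa [countEnq_append_singleton, countDeq_append_singleton, henq, hdeq] using
      hQ.countEnq_eq r
  pairwise := hQ.pairwise.imp (·.append_singleton (henq _))

theorem QueueInv.step {H : List (GEv N)} {c c' : GConfig N} {e : GEv N} (hQ : QueueInv H c.Q)
    (hc : GInv c) (hs : GStep N c e c') : QueueInv (H ++ [e]) c'.Q := by
  cases hs with
  | enq p _ hp => exact hQ.append_enq hp
  | deq p r _ hhd =>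
    obtain ⟨Q', hQ'⟩ : ∃ Q', c.Q = p :: Q' := List.head?_eq_some_iff.mp hhd
    rw [hQ'] at hQ ⊢
    exact hQ.append_deq (hQ' ▸ hc.nodup) r
  | _ => exact hQ.append_of_ne_enq_of_isDeqBy_eq_false (by simp) (by simp [isDeqBy])

theorem QueueInv.countEnq_take_le_countDeq {H : List (GEv N)} {Q : List (Fin N)}
    (hQ : QueueInv H Q) {p q : Fin N} (hq : Q.head? = some q) {a b : ℕ} (hab : a < b)
    (hb : H[b]? = some (.enq q)) : countEnq (H.take (a + 1)) p ≤ countDeq H p := by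
  have hcount := hQ.countEnq_eq p
  by_cases hp : p ∈ Q
  · obtain ⟨Q', rfl⟩ : ∃ Q', Q = q :: Q' := List.head?_eq_some_iff.mp hq
    obtain ⟨m, hbm, hm⟩ : ∃ m, b ≤ m ∧ H[m]? = some (.enq p) := by
      rcases List.mem_cons.mp hp with rfl | hp
      · exact ⟨b, le_rfl, hb⟩
      · obtain ⟨m, hbm, hm⟩ := (List.rel_of_pairwise_cons hQ.pairwise hp) b hb
        exact ⟨m, hbm.le, hm⟩
    have := countEnq_take_lt (hab.trans_le hbm) hm
    simp only [hp, if_true] at hcount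
    omega
  · have : countEnq (H.take (a + 1)) p ≤ countEnq H p := (List.take_prefix _ _).count_le _
    simp only [hp, if_false] at hcount
    omega

theorem GReaches.invariants {c₀ c : GConfig N} {H : List (GEv N)} (hr : GReaches N c₀ H c)
    {G : List (GEv N)} (hc₀ : GInv c₀) (hQ₀ : QueueInv G c₀.Q) :
    GInv c ∧ QueueInv (G ++ H) c.Q := by
  induction hr generalizing G with
  | nil => simpa using ⟨hc₀, hQ₀⟩
  | cons hs _ ih =>
    simpa using ih (hc₀.step hs) (hQ₀.step hc₀ hs)

theorem GReaches.invariants_of_gInit {c : GConfig N} {H : List (GEv N)}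
    (hr : GReaches N (gInit N) H c) : GInv c ∧ QueueInv H c.Q := by
  simpa using hr.invariants gInv_gInit (G := [])
    ⟨fun _ => by simp [countEnq, countDeq, gInit], List.Pairwise.nil⟩

end

theorem fcfs_dequeue_and_mutex_general (N : ℕ) (H : List (GEv N)) (c : GConfig N)
    (hrun : GReaches N (gInit N) H c)
    (p q : Fin N) (i a b : ℕ)
    (hab : a < b)
    (hb : H[b]? = some (GEv.enq q))
    (hi : countEnq (H.take (a + 1)) p = i)
    (hcs : inCS c q) :
    i ≤ countDeq H p ∧ ∀ x y : Fin N, inCS c x → inCS c y → x = y := by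
  obtain ⟨hc, hQ⟩ := hrun.invariants_of_gInit
  subst hi
  exact ⟨hQ.countEnq_take_le_countDeq (hc.head_of_inCS q hcs) hab hb,
    fun x y => hc.eq_of_inCS⟩

/-- Lemma 5.2 and Corollary 5.3: if in a valid history H process p executes its i-th
enqueue (at position a) before q executes its j-th enqueue (at position b), and at the
end of H process q is in the CS in passage j (its j-th and last enqueue), then p has
already executed its dequeue in passage i; consequently at most one process is in the
critical section at the end of any valid history (mutual exclusion). -/
theorem fcfs_dequeue_and_mutex (N : ℕ) (H : List (GEv N)) (c : GConfig N)
    (hrun : GReaches N (gInit N) H c)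
    (p q : Fin N) (i j a b : ℕ)
    (hab : a < b)
    (ha : H[a]? = some (GEv.enq p))
    (hb : H[b]? = some (GEv.enq q))
    (hi : countEnq (H.take (a + 1)) p = i)
    (hj : countEnq (H.take (b + 1)) q = j)
    (hjlast : countEnq H q = j)
    (hcs : inCS c q) :
    i ≤ countDeq H p ∧ ∀ x y : Fin N, inCS c x → inCS c y → x = y :=
  fcfs_dequeue_and_mutex_general N H c hrun p q i a b hab hb hi hcs
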